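/- arXiv:quant-ph/0702212 — 3 statements merged into one kernel-verified Lean document; each statement's English description precedes it below -/
import Mathlib

section
/- Every open graph state with flow has generalized flow: if (G,I,O) with all measured qubits labeled XY admits a flow (f, <), then the map g(i) := {f(i)} together with the same partial order is a generalized flow. -/
open Finset

/-- The odd neighborhood `Odd(K) = {u : |N_G(u) ∩ K| is odd}` of a set of vertices. -/
def oddNbhd {V : Type*} [Fintype V] [DecidableEq V] (G : SimpleGraph V)
    [DecidableRel G.Adj] (K : Finset V) : Finset V :=
  Finset.univ.filter fun u => (G.neighborFinset u ∩ K).card % 2 = 1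

lemma mem_oddNbhd_singleton {V : Type*} [Fintype V] [DecidableEq V] (G : SimpleGraph V)
    [DecidableRel G.Adj] (w u : V) : u ∈ oddNbhd G {w} ↔ G.Adj u w := by
  simp only [oddNbhd, Finset.mem_filter, Finset.mem_univ, true_and]
  by_cases h : G.Adj u w
  · have : G.neighborFinset u ∩ {w} = {w} := by
      ext x; simp (config := {contextual := true}) [h]
    simp [this, h]
  · have : G.neighborFinset u ∩ {w} = ∅ := by
      ext x; simp (config := {contextual := true}) [h]
    simp [this, h]

/-- Every open graph state with flow (all measured qubits labeled `XY`) has generalized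
flow: if `(f, <)` is a flow for `(G, I, O)`, then `g(i) := {f(i)}` with the same partial
order satisfies the generalized flow conditions (G1), (G2), (G3). -/
theorem flow_implies_gflow {V : Type*} [Fintype V] [DecidableEq V] [PartialOrder V]
    (G : SimpleGraph V) [DecidableRel G.Adj] (I O : Finset V) (f : V → V)
    (hrange : ∀ i ∉ O, f i ∉ I)
    (hF1 : ∀ i ∉ O, G.Adj i (f i))
    (hF2 : ∀ i ∉ O, i < f i)
    (hF3 : ∀ i ∉ O, ∀ k ∈ G.neighborFinset (f i), k ≠ i → i < k) :
    -- g(i) = {f(i)} maps measured qubits to subsets of prepared qubits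
    (∀ i ∉ O, ∀ j ∈ ({f i} : Finset V), j ∉ I) ∧
    -- (G1)
    (∀ i ∉ O, ∀ j ∈ ({f i} : Finset V), j ≠ i → i < j) ∧
    -- (G2)
    (∀ i ∉ O, ∀ j : V, j ≤ i → j ≠ i → j ∉ oddNbhd G ({f i} : Finset V)) ∧
    -- (G3), all labels are XY
    (∀ i ∉ O, i ∉ ({f i} : Finset V) ∧ i ∈ oddNbhd G ({f i} : Finset V)) := by
  refine ⟨?_, ?_, ?_, ?_⟩
  · intro i hi j hj
    rw [Finset.mem_singleton] at hj; subst hj; exact hrange i hi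
  · intro i hi j hj _
    rw [Finset.mem_singleton] at hj; subst hj; exact hF2 i hi
  · intro i hi j hji hne hmem
    rw [mem_oddNbhd_singleton] at hmem
    have : i < j := hF3 i hi j (by rwa [SimpleGraph.mem_neighborFinset, SimpleGraph.adj_comm]) hne
    exact absurd (lt_of_le_of_lt hji this) (lt_irrefl j)
  · intro i hi
    constructor
    · rw [Finset.mem_singleton]
      exact fun h => (hF2 i hi).ne h
    · rw [mem_oddNbhd_singleton]; exact hF1 i hi
end

section
/- If a Pauli operator of the form C_A Z_n (with C_A a product of Pauli X and Z operators supported on a set A disjoint from I, and n ∉ I) stabilizes the state E_G N_{V∖I} |ψ⟩_I for all input states |ψ⟩_I, then the Z-support of the corresponding stabilizer decomposition as a product of graph stabilizers K_u does not intersect I; more precisely, if ∏_{u∈S} K_u stabilizes E_G N_{V∖I}|ψ⟩_I for all |ψ⟩ then S ∩ I = ∅. -/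
open Finset

variable {V : Type*} [Fintype V] [DecidableEq V]

/-- The diagonal coefficient of `E_G = ∏_{(i,j) ∈ E(G)} CZ_{ij}` on the computational
basis state `x : V → Fin 2`: a factor `−1` for every edge both of whose endpoints are
in state `|1⟩`. -/
noncomputable def egCoef (G : SimpleGraph V) [DecidableRel G.Adj] (x : V → Fin 2) : ℂ :=
  ∏ e ∈ G.edgeFinset,
    Sym2.lift ⟨fun i j => if x i = 1 ∧ x j = 1 then (-1 : ℂ) else 1,
      fun i j => by by_cases h : x i = 1 <;> by_cases h' : x j = 1 <;> simp [h, h']⟩ e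

/-- The entangling operator `E_G` acting on states (functions on the computational basis). -/
noncomputable def egOp (G : SimpleGraph V) [DecidableRel G.Adj]
    (ψ : (V → Fin 2) → ℂ) : (V → Fin 2) → ℂ :=
  fun x => egCoef G x * ψ x

/-- `∏_{v ∈ S} Z_v` acting on states. -/
noncomputable def zOp (S : Finset V) (ψ : (V → Fin 2) → ℂ) : (V → Fin 2) → ℂ :=
  fun x => (-1 : ℂ) ^ (S.filter fun v => x v = 1).card * ψ x

/-- Bit flip on the set `S`. -/
def flipS (S : Finset V) (x : V → Fin 2) : V → Fin 2 :=
  fun v => if v ∈ S then x v + 1 else x v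

/-- `∏_{v ∈ S} X_v` acting on states. -/
def xOp (S : Finset V) (ψ : (V → Fin 2) → ℂ) : (V → Fin 2) → ℂ :=
  fun x => ψ (flipS S x)

/-- The state `|+⟩^{⊗V}`. -/
noncomputable def plusState : (V → Fin 2) → ℂ :=
  fun _ => ((Real.sqrt 2 : ℂ))⁻¹ ^ Fintype.card V

/-- The graph stabilizer `K_i = X_i ∏_{j ∈ N_G(i)} Z_j` acting on states. -/
noncomputable def kOp (G : SimpleGraph V) [DecidableRel G.Adj] (i : V)
    (ψ : (V → Fin 2) → ℂ) : (V → Fin 2) → ℂ :=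
  xOp {i} (zOp (G.neighborFinset i) ψ)

/-- The product `∏_{u ∈ S} K_u` of graph stabilizers (the `K_u` pairwise commute, so
the order of composition is immaterial). -/
noncomputable def kProd (G : SimpleGraph V) [DecidableRel G.Adj] (S : Finset V) :
    ((V → Fin 2) → ℂ) → ((V → Fin 2) → ℂ) :=
  (S.toList.map fun u => kOp G u).foldr (fun f g => f ∘ g) id

/-- The preparation `N_{V∖I} |ψ⟩_I`: the input state `ψ` on the qubits of `I`, with every
qubit of `V ∖ I` prepared in `|+⟩`. -/
noncomputable def prep (I : Finset V) (ψ : ({v // v ∈ I} → Fin 2) → ℂ) :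
    (V → Fin 2) → ℂ :=
  fun x => ψ (fun v => x v.1) * ((Real.sqrt 2 : ℂ))⁻¹ ^ (Fintype.card V - I.card)

lemma kOp_smul (G : SimpleGraph V) [DecidableRel G.Adj] (i : V) (c : ℂ)
    (ψ : (V → Fin 2) → ℂ) : kOp G i (fun x => c * ψ x) = fun x => c * kOp G i ψ x := by
  funext x
  simp only [kOp, xOp, zOp]
  ring

lemma kOp_zOp_single (G : SimpleGraph V) [DecidableRel G.Adj] (i u : V)
    (ψ : (V → Fin 2) → ℂ) :
    kOp G i (zOp {u} ψ) =
      fun x => (if u = i then (-1 : ℂ) else 1) * zOp {u} (kOp G i ψ) x := by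
  funext x
  simp only [kOp, xOp, zOp]
  have key : ((-1 : ℂ)) ^ (({u} : Finset V).filter fun v => flipS {i} x v = 1).card =
      (if u = i then (-1 : ℂ) else 1) *
        (-1 : ℂ) ^ (({u} : Finset V).filter fun v => x v = 1).card := by
    have h2 : ∀ a : Fin 2, (a + 1 = 1) ↔ ¬ a = 1 := by decide
    by_cases h : u = i
    · subst h
      have hf : flipS {u} x u = x u + 1 := by simp [flipS]
      by_cases hx : x u = 1
      · simp [Finset.filter_singleton, hf, hx, (h2 (x u)).not_left, h2]
      · simp [Finset.filter_singleton, hf, hx, (h2 (x u)).2 hx]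
    · have hf : flipS {i} x u = x u := by simp [flipS, h]
      simp [Finset.filter_singleton, hf, h]
  rw [key]
  ring

lemma foldr_zOp (G : SimpleGraph V) [DecidableRel G.Adj] (u : V) (l : List V)
    (ψ : (V → Fin 2) → ℂ) :
    (l.map fun i => kOp G i).foldr (fun f g => f ∘ g) id (zOp {u} ψ) =
      fun x => ((-1 : ℂ)) ^ (l.count u) *
        zOp {u} ((l.map fun i => kOp G i).foldr (fun f g => f ∘ g) id ψ) x := by
  induction l with
  | nil => funext x; simp
  | cons i l ih =>
    show kOp G i ((l.map fun i => kOp G i).foldr (fun f g => f ∘ g) id (zOp {u} ψ)) = _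
    rw [ih, kOp_smul, kOp_zOp_single]
    funext x
    rw [List.count_cons]
    by_cases h : u = i
    · simp [h, pow_succ]
    · simp [h, Ne.symm h]

/-- If `∏_{u ∈ S} K_u` stabilizes `E_G N_{V∖I} |ψ⟩_I` for all input states `|ψ⟩_I`,
then `S ∩ I = ∅`. -/
theorem stabilizer_support_disjoint_from_inputs (G : SimpleGraph V)
    [DecidableRel G.Adj] (I S : Finset V)
    (hstab : ∀ ψ : ({v // v ∈ I} → Fin 2) → ℂ,
      kProd G S (egOp G (prep I ψ)) = egOp G (prep I ψ)) :
    S ∩ I = ∅ := by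
  by_contra hne
  obtain ⟨u, hu⟩ := Finset.nonempty_iff_ne_empty.2 hne
  have huS : u ∈ S := (Finset.mem_inter.1 hu).1
  have huI : u ∈ I := (Finset.mem_inter.1 hu).2
  set ψ0 : ({v // v ∈ I} → Fin 2) → ℂ := fun _ => 1 with hψ0
  set ψ1 : ({v // v ∈ I} → Fin 2) → ℂ :=
    fun y => if y ⟨u, huI⟩ = 1 then (-1 : ℂ) else 1 with hψ1
  set Φ : (V → Fin 2) → ℂ := egOp G (prep I ψ0) with hΦ
  have hprep : egOp G (prep I ψ1) = zOp {u} Φ := by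
    funext x
    simp only [hΦ, egOp, prep, zOp, hψ0, hψ1, Finset.filter_singleton]
    by_cases hx : x u = 1 <;> simp [hx]
  have hc : S.toList.count u = 1 := by
    rw [List.count_eq_one_of_mem S.nodup_toList (Finset.mem_toList.2 huS)]
  have h1 := hstab ψ1
  rw [hprep] at h1
  have h2 : kProd G S (zOp {u} Φ) =
      fun x => (-1 : ℂ) * zOp {u} (kProd G S Φ) x := by
    have := foldr_zOp G u S.toList Φ
    simp only [kProd, this, hc, pow_one]
  rw [h2, hstab ψ0] at h1
  have h3 := congrFun h1 (fun _ => 0)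
  have hz : zOp {u} Φ (fun _ => 0) =
      ((Real.sqrt 2 : ℂ))⁻¹ ^ (Fintype.card V - I.card) := by
    simp only [zOp, hΦ, egOp, prep, hψ0, Finset.filter_singleton]
    have he : egCoef G (fun _ => (0 : Fin 2)) = 1 := by
      unfold egCoef
      refine Finset.prod_eq_one fun e he => ?_
      induction e using Sym2.inductionOn with
      | hf i j => simp
    simp [he]
  rw [hz] at h3
  have hne2 : ((Real.sqrt 2 : ℂ))⁻¹ ^ (Fintype.card V - I.card) ≠ 0 := by
    apply pow_ne_zero
    simp only [ne_eq, inv_eq_zero]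
    norm_num [Complex.ofReal_eq_zero, Real.sqrt_eq_zero']
  exact hne2 (by linear_combination -h3 / 2)
end

section
/- If a runnable pattern on an open graph state is strongly deterministic, then all branch maps A_s are equal up to phase and each satisfies A_s† A_s = (1/2^n) U† U where U is the preparation-entanglement isometry and n the number of measurements; in particular 2^{n/2} A_s is an isometry from the input to the output Hilbert space. -/
/-! Global phases cancel in `A† A`, so strong determinism makes all `2 ^ n` operators
`A_s† A_s` equal; the completeness relation then forces each to be `2⁻ⁿ · 1`, and
`A_s† A_s = c · 1` says exactly that `√c⁻¹ · A_s` is an isometry. -/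

theorem eq_inv_card_smul_of_sum_eq_of_forall_eq {ι 𝕜 M : Type*} [Fintype ι]
    [DivisionRing 𝕜] [CharZero 𝕜] [AddCommGroup M] [Module 𝕜 M]
    {f : ι → M} {x : M} (hsum : ∑ i, f i = x) (hconst : ∀ i j, f i = f j) (i : ι) :
    f i = (Fintype.card ι : 𝕜)⁻¹ • x := by
  have hcard : (Fintype.card ι : 𝕜) ≠ 0 :=
    Nat.cast_ne_zero.mpr (Fintype.card_pos_iff.mpr ⟨i⟩).ne'
  have hx : x = (Fintype.card ι : 𝕜) • f i := by
    rw [← hsum, Finset.sum_congr rfl fun j _ => hconst j i, Finset.sum_const,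
      Finset.card_univ, Nat.cast_smul_eq_nsmul]
  rw [hx, smul_smul, inv_mul_cancel₀ hcard, one_smul]

namespace LinearMap

variable {𝕜 E F : Type*} [RCLike 𝕜]
  [NormedAddCommGroup E] [InnerProductSpace 𝕜 E] [FiniteDimensional 𝕜 E]
  [NormedAddCommGroup F] [InnerProductSpace 𝕜 F] [FiniteDimensional 𝕜 F]

theorem adjoint_smul_comp_smul (c : 𝕜) (A : E →ₗ[𝕜] F) :
    adjoint (c • A) ∘ₗ (c • A) = ((‖c‖ : 𝕜) ^ 2) • (adjoint A ∘ₗ A) := by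
  rw [map_smulₛₗ, smul_comp, comp_smul, smul_smul, RCLike.conj_mul]

theorem norm_map_iff_adjoint_comp_self (u : E →ₗ[𝕜] F) :
    (∀ x, ‖u x‖ = ‖x‖) ↔ adjoint u ∘ₗ u = id := by
  have := FiniteDimensional.complete 𝕜 E
  have := FiniteDimensional.complete 𝕜 F
  rw [show (∀ x, ‖u x‖ = ‖x‖) ↔ ∀ x, ‖toContinuousLinearMap u x‖ = ‖x‖ from Iff.rfl,
    ContinuousLinearMap.norm_map_iff_adjoint_comp_self, ← adjoint_toContinuousLinearMap,
    ContinuousLinearMap.one_def]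
  exact ⟨fun h => congrArg ContinuousLinearMap.toLinearMap h,
    fun h => ContinuousLinearMap.coe_injective h⟩

end LinearMap

open LinearMap in
theorem strong_determinism_branch_maps_general
    {Hin HV Hout : Type*}
    [NormedAddCommGroup Hin] [InnerProductSpace ℂ Hin] [FiniteDimensional ℂ Hin]
    [NormedAddCommGroup HV] [InnerProductSpace ℂ HV] [FiniteDimensional ℂ HV]
    [NormedAddCommGroup Hout] [InnerProductSpace ℂ Hout] [FiniteDimensional ℂ Hout]
    (n : ℕ)
    (A : (Fin n → Bool) → (Hin →ₗ[ℂ] Hout))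
    (U : Hin →ₗ[ℂ] HV)
    -- `U` is an isometry
    (hU : ∀ x : Hin, ‖U x‖ = ‖x‖)
    -- completeness relation `∑ₛ A_s† A_s = 1`
    (hcomp : ∑ s : Fin n → Bool, LinearMap.adjoint (A s) ∘ₗ A s = LinearMap.id)
    -- strong determinism: branch maps are equal up to a global phase
    (hdet : ∀ s s' : Fin n → Bool, ∃ φ : ℝ, A s = Complex.exp (φ * Complex.I) • A s') :
    ∀ s : Fin n → Bool,
      LinearMap.adjoint (A s) ∘ₗ A s
          = ((2 : ℂ) ^ n)⁻¹ • (LinearMap.adjoint U ∘ₗ U) ∧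
      LinearMap.adjoint (A s) ∘ₗ A s = ((2 : ℂ) ^ n)⁻¹ • LinearMap.id ∧
      ∀ x : Hin, Real.sqrt (2 ^ n) * ‖A s x‖ = ‖x‖ := by
  intro s
  have hUU : adjoint U ∘ₗ U = LinearMap.id := (norm_map_iff_adjoint_comp_self U).mp hU
  have hgram_eq : ∀ s s', adjoint (A s) ∘ₗ A s = adjoint (A s') ∘ₗ A s' := fun s s' => by
    obtain ⟨φ, hφ⟩ := hdet s s'
    rw [hφ, adjoint_smul_comp_smul, Complex.norm_exp_ofReal_mul_I, RCLike.ofReal_one,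
      one_pow, one_smul]
  have hgram : adjoint (A s) ∘ₗ A s = ((2 : ℂ) ^ n)⁻¹ • LinearMap.id := by
    simpa using eq_inv_card_smul_of_sum_eq_of_forall_eq (𝕜 := ℂ) hcomp hgram_eq s
  have hscaled : adjoint ((Real.sqrt (2 ^ n) : ℂ) • A s) ∘ₗ ((Real.sqrt (2 ^ n) : ℂ) • A s)
      = LinearMap.id := by
    rw [adjoint_smul_comp_smul, hgram, smul_smul, Complex.norm_real,
      Real.norm_of_nonneg (Real.sqrt_nonneg _), ← RCLike.ofReal_pow,
      Real.sq_sqrt (by positivity), RCLike.ofReal_pow, RCLike.ofReal_ofNat,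
      mul_inv_cancel₀ (pow_ne_zero n two_ne_zero), one_smul]
  refine ⟨by rw [hgram, hUU], hgram, fun x => ?_⟩
  simpa [norm_smul, abs_of_nonneg (Real.sqrt_nonneg _)] using
    (norm_map_iff_adjoint_comp_self _).mpr hscaled x

/-- If a runnable pattern with `n` measurements is strongly deterministic — all branch
maps `A_s = C_s ∘ Π_s ∘ U` (with `C_s` unitary on the output space and `U` the
preparation-entanglement isometry) are equal up to a global phase — then, using the
completeness relation `∑ₛ A_s† A_s = 1`, each branch map satisfies
`A_s† A_s = 2⁻ⁿ · U† U` (`= 2⁻ⁿ · Id`); in particular `2^{n/2} A_s` is an isometry. -/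
theorem strong_determinism_branch_maps
    {Hin HV Hout : Type*}
    [NormedAddCommGroup Hin] [InnerProductSpace ℂ Hin] [FiniteDimensional ℂ Hin]
    [NormedAddCommGroup HV] [InnerProductSpace ℂ HV] [FiniteDimensional ℂ HV]
    [NormedAddCommGroup Hout] [InnerProductSpace ℂ Hout] [FiniteDimensional ℂ Hout]
    (n : ℕ)
    (A : (Fin n → Bool) → (Hin →ₗ[ℂ] Hout))
    (C : (Fin n → Bool) → (Hout →ₗ[ℂ] Hout))
    (P : (Fin n → Bool) → (HV →ₗ[ℂ] Hout))
    (U : Hin →ₗ[ℂ] HV)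
    -- `U` is an isometry
    (hU : ∀ x : Hin, ‖U x‖ = ‖x‖)
    -- each `C_s` is unitary
    (hC : ∀ s, ∀ y : Hout, ‖C s y‖ = ‖y‖)
    -- branch maps decompose as `A_s = C_s Π_s U`
    (hA : ∀ s, A s = C s ∘ₗ P s ∘ₗ U)
    -- completeness relation `∑ₛ A_s† A_s = 1`
    (hcomp : ∑ s : Fin n → Bool, LinearMap.adjoint (A s) ∘ₗ A s = LinearMap.id)
    -- strong determinism: branch maps are equal up to a global phase
    (hdet : ∀ s s' : Fin n → Bool, ∃ φ : ℝ, A s = Complex.exp (φ * Complex.I) • A s') :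
    ∀ s : Fin n → Bool,
      LinearMap.adjoint (A s) ∘ₗ A s
          = ((2 : ℂ) ^ n)⁻¹ • (LinearMap.adjoint U ∘ₗ U) ∧
      LinearMap.adjoint (A s) ∘ₗ A s = ((2 : ℂ) ^ n)⁻¹ • LinearMap.id ∧
      ∀ x : Hin, Real.sqrt (2 ^ n) * ‖A s x‖ = ‖x‖ :=
  strong_determinism_branch_maps_general n A U hU hcomp hdet
end
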